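/- Let G be an abelian group and h a finite dimensional Leibniz algebra. There is a bijection between the set of G-gradings on h and the set of bialgebra homomorphisms A(h) → k[G]; given a bialgebra map θ : A(h) → k[G], the associated grading is h_σ^(θ) = { x ∈ h | (Id_h ⊗ θ)(η_h(x)) = x ⊗ σ } for σ ∈ G. -/

import Mathlib

open TensorProduct MvPolynomial

/-- The universal polynomial `P_{(a,i,j)} = Σ_u β^u_{ij} X_{au} - Σ_{s,t} τ^a_{st} X_{si} X_{tj}`. -/
noncomputable def univPoly {k : Type*} [Field k] {n : ℕ} {I : Type*}
    (τ : Fin n → Fin n → Fin n → k) (β : I → I → I →₀ k)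
    (a : Fin n) (i j : I) : MvPolynomial (Fin n × I) k :=
  (β i j).sum (fun u c => C c * X (a, u)) -
    ∑ s : Fin n, ∑ t : Fin n, C (τ s t a) * X (s, i) * X (t, j)

/-- The ideal generated by the universal polynomials. -/
noncomputable def univIdeal {k : Type*} [Field k] {n : ℕ} {I : Type*}
    (τ : Fin n → Fin n → Fin n → k) (β : I → I → I →₀ k) :
    Ideal (MvPolynomial (Fin n × I) k) :=
  Ideal.span (Set.range fun p : Fin n × I × I => univPoly τ β p.1 p.2.1 p.2.2)

/-- The universal algebra `A(h,g)`. -/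
noncomputable abbrev univAlg {k : Type*} [Field k] {n : ℕ} {I : Type*}
    (τ : Fin n → Fin n → Fin n → k) (β : I → I → I →₀ k) :=
  MvPolynomial (Fin n × I) k ⧸ univIdeal τ β

/-- The generator `x_{si}` of `A(h,g)`. -/
noncomputable def univGen {k : Type*} [Field k] {n : ℕ} {I : Type*}
    (τ : Fin n → Fin n → Fin n → k) (β : I → I → I →₀ k)
    (s : Fin n) (i : I) : univAlg τ β :=
  Ideal.Quotient.mk (univIdeal τ β) (X (s, i))

/-- The universal ideal of a single `n`-dimensional Leibniz algebra `h`
(with structure constants `τ`), inside `M(n) = k[X_{ij}]`. -/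
noncomputable abbrev univIdealH {k : Type*} [Field k] {n : ℕ}
    (τ : Fin n → Fin n → Fin n → k) : Ideal (MvPolynomial (Fin n × Fin n) k) :=
  univIdeal τ (fun i j => Finsupp.equivFunOnFinite.symm (τ i j))

/-- The universal algebra `A(h) = A(h,h)` of an `n`-dimensional Leibniz algebra. -/
noncomputable abbrev univAlgH {k : Type*} [Field k] {n : ℕ}
    (τ : Fin n → Fin n → Fin n → k) :=
  univAlg τ (fun i j => Finsupp.equivFunOnFinite.symm (τ i j))

/-- The generator `x_{ij}` of `A(h)`. -/
noncomputable abbrev univGenH {k : Type*} [Field k] {n : ℕ}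
    (τ : Fin n → Fin n → Fin n → k) (i j : Fin n) : univAlgH τ :=
  univGen τ (fun i j => Finsupp.equivFunOnFinite.symm (τ i j)) i j

/-- The comultiplication of the matrix bialgebra `M(n) = k[X_{ij}]`:
`Δ(X_{ij}) = Σ_s X_{is} ⊗ X_{sj}`. -/
noncomputable def deltaM (k : Type*) [Field k] (n : ℕ) :
    MvPolynomial (Fin n × Fin n) k →ₐ[k]
      MvPolynomial (Fin n × Fin n) k ⊗[k] MvPolynomial (Fin n × Fin n) k :=
  MvPolynomial.aeval (fun p : Fin n × Fin n =>
    ∑ s : Fin n, MvPolynomial.X (p.1, s) ⊗ₜ[k] MvPolynomial.X (s, p.2))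

/-- The counit of the matrix bialgebra `M(n)`: `ε(X_{ij}) = δ_{ij}`. -/
noncomputable def epsM (k : Type*) [Field k] (n : ℕ) :
    MvPolynomial (Fin n × Fin n) k →ₐ[k] k :=
  MvPolynomial.aeval (fun p : Fin n × Fin n => if p.1 = p.2 then 1 else 0)


/-!
Put `c s i := θ (x_{si}) ∈ k[G]` and let `P_g` be the matrix of `g`-coefficients of `c`.
Since `Δ g = g ⊗ g` and `ε g = 1`, comultiplicativity of `θ` reads `P_a P_b = δ_{ab} P_a` and
counitality reads `∑_g P_g = 1`: the `P_g` are complete orthogonal idempotents, so their images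
form a grading, which is `{x | (id ⊗ θ)(η x) = x ⊗ σ}`; the defining relations of `A(h)` make it
compatible with the bracket. Conversely a grading gives the coaction `x ↦ ∑_g x_g ⊗ g`; its matrix
satisfies the defining relations, hence comes from a unique algebra map `θ`, and comultiplicativity
and counitality of `θ` only have to be checked on homogeneous vectors, where they are immediate.
-/

theorem OrthogonalIdempotents.mem_range_iff {R M ι : Type*} [Semiring R] [AddCommMonoid M]
    [Module R M] [DecidableEq ι] {p : ι → Module.End R M} (hp : OrthogonalIdempotents p)
    (i : ι) (x : M) : x ∈ LinearMap.range (p i) ↔ ∀ j, p j x = if j = i then x else 0 := by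
  constructor
  · rintro ⟨y, rfl⟩ j
    rw [← Module.End.mul_apply, hp.mul_eq]
    split_ifs with hji
    · rw [hji]
    · rfl
  · exact fun h => ⟨x, by simpa using h i⟩

theorem OrthogonalIdempotents.isInternal_range {R M ι : Type*} [Ring R] [AddCommGroup M]
    [Module R M] [DecidableEq ι] {p : ι → Module.End R M} (hp : OrthogonalIdempotents p)
    {s : Finset ι} (hs : ∑ i ∈ s, p i = 1) :
    DirectSum.IsInternal (fun i => LinearMap.range (p i) : ι → Submodule R M) := by
  refine DirectSum.isInternal_submodule_of_iSupIndep_of_iSup_eq_top (fun i => ?_) ?_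
  · have hker : ⨆ (j) (_ : j ≠ i), LinearMap.range (p j) ≤ LinearMap.ker (p i) :=
      iSup₂_le fun j hj => LinearMap.range_le_ker_iff.2 (hp.ortho hj.symm)
    refine Submodule.disjoint_def.2 fun x hx hx' => ?_
    obtain ⟨y, rfl⟩ := hx
    simpa [← Module.End.mul_apply, (hp.idem i).eq] using hker hx'
  · refine eq_top_iff.2 fun x _ => ?_
    have hx : x = ∑ i ∈ s, p i x := by simp [← LinearMap.sum_apply, hs]
    rw [hx]
    exact Submodule.sum_mem _ fun i _ => Submodule.mem_iSup_of_mem i (LinearMap.mem_range_self _ _)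

theorem DirectSum.IsInternal.induction_on {R M ι : Type*} [Semiring R] [AddCommMonoid M]
    [Module R M] [DecidableEq ι] {A : ι → Submodule R M} (h : DirectSum.IsInternal A)
    {P : M → Prop} (x : M) (mem : ∀ i, ∀ x ∈ A i, P x) (zero : P 0)
    (add : ∀ x y, P x → P y → P (x + y)) : P x :=
  Submodule.iSup_induction (motive := P) A (h.submodule_iSup_eq_top ▸ Submodule.mem_top)
    mem zero add

namespace MonoidAlgebra

variable {k G : Type*} [CommSemiring k] [Monoid G]

omit [Monoid G] in
@[simp]
theorem basis_repr_apply (f : MonoidAlgebra k G) (g : G) : (basis G k).repr f g = f.coeff g :=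
  rfl

theorem tensorProduct_repr_of_comul [DecidableEq G]
    {Δ : MonoidAlgebra k G →ₗ[k] MonoidAlgebra k G ⊗[k] MonoidAlgebra k G}
    (hΔ : ∀ g, Δ (of k G g) = of k G g ⊗ₜ[k] of k G g) (f : MonoidAlgebra k G) (a b : G) :
    ((basis G k).tensorProduct (basis G k)).repr (Δ f) (a, b) =
      if a = b then f.coeff a else 0 := by
  have h : Finsupp.lapply (a, b) ∘ₗ
      ((basis G k).tensorProduct (basis G k)).repr.toLinearMap ∘ₗ Δ =
      if a = b then Finsupp.lapply a ∘ₗ (basis G k).repr.toLinearMap else 0 := by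
    refine (basis G k).ext fun g => ?_
    have hg := hΔ g
    simp only [of_apply] at hg
    by_cases hga : g = a
    · subst hga
      split_ifs with hab
      · simp [hg, ← hab]
      · simp [hg, Ne.symm hab]
    · split_ifs <;> simp [hg, Finsupp.single_apply, hga]
  have := LinearMap.congr_fun h f
  split_ifs at this ⊢ <;> exact this

theorem eq_sum_coeff_of_counit {ε : MonoidAlgebra k G →ₗ[k] k}
    (hε : ∀ g, ε (of k G g) = 1) (f : MonoidAlgebra k G) {s : Finset G}
    (hs : f.coeff.support ⊆ s) : ε f = ∑ g ∈ s, f.coeff g := by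
  have h : ε = Finsupp.linearCombination k (fun _ => (1 : k)) ∘ₗ
      (basis G k).repr.toLinearMap :=
    (basis G k).ext fun g => by
      rw [LinearMap.comp_apply, LinearEquiv.coe_coe, Module.Basis.repr_self,
        Finsupp.linearCombination_single, one_smul, basis_apply, ← of_apply, hε]
  rw [h]
  simp only [LinearMap.coe_comp, LinearEquiv.coe_coe, Function.comp_apply,
    Finsupp.linearCombination_apply, smul_eq_mul, mul_one]
  exact Finsupp.sum_of_support_subset _ hs _ fun _ _ => rfl

end MonoidAlgebra

section Coordinates

variable {k : Type*} [CommSemiring k] {n : ℕ}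

theorem sum_smul_single_one (x : Fin n → k) :
    ∑ s, x s • (Pi.single s 1 : Fin n → k) = x := by
  simpa using (Pi.basisFun k (Fin n)).sum_repr x

theorem bracket_apply_eq_sum {τ : Fin n → Fin n → Fin n → k}
    {bH : (Fin n → k) →ₗ[k] (Fin n → k) →ₗ[k] (Fin n → k)}
    (hbH : ∀ i j : Fin n, bH (Pi.single i 1) (Pi.single j 1) = fun s => τ i j s)
    (x y : Fin n → k) (a : Fin n) : bH x y a = ∑ s, ∑ t, x s * y t * τ s t a := by
  conv_lhs => rw [← sum_smul_single_one x, ← sum_smul_single_one y]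
  simp [map_sum, hbH, Finset.sum_apply, Finset.mul_sum, mul_left_comm]
  rw [Finset.sum_comm]
  simp only [mul_assoc]

variable (k) in
noncomputable def TensorProduct.piScalarLeft (M : Type*) [AddCommMonoid M] [Module k M] :
    (Fin n → k) ⊗[k] M ≃ₗ[k] (Fin n → M) :=
  TensorProduct.comm k (Fin n → k) M ≪≫ₗ TensorProduct.piScalarRight k k M (Fin n)

@[simp]
theorem TensorProduct.piScalarLeft_tmul {M : Type*} [AddCommMonoid M] [Module k M]
    (x : Fin n → k) (m : M) : piScalarLeft k M (x ⊗ₜ[k] m) = fun s => x s • m := by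
  simp [piScalarLeft]

section MatrixCoaction

variable {B : Type*} [AddCommMonoid B] [Module k B]

-- Read through `piScalarLeft`, this is `x ↦ ∑ s, e_s ⊗ ∑ i, x i • c s i`.
noncomputable def matrixCoaction (c : Fin n → Fin n → B) : (Fin n → k) →ₗ[k] Fin n → B :=
  Fintype.linearCombination k fun i s => c s i

theorem matrixCoaction_apply (c : Fin n → Fin n → B) (x : Fin n → k) (s : Fin n) :
    matrixCoaction c x s = ∑ i, x i • c s i := by
  simp [matrixCoaction, Fintype.linearCombination_apply, Finset.sum_apply]

theorem matrixCoaction_apply_single_one (ρ : (Fin n → k) →ₗ[k] Fin n → B) :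
    matrixCoaction (fun s i => ρ (Pi.single i 1) s) = ρ := by
  ext i s
  simp [matrixCoaction_apply, Pi.single_apply]

theorem matrixCoaction_injective :
    Function.Injective (matrixCoaction : (Fin n → Fin n → B) → (Fin n → k) →ₗ[k] Fin n → B) := by
  intro c c' h
  funext s i
  simpa [matrixCoaction_apply, Pi.single_apply] using
    congrFun (LinearMap.congr_fun h (Pi.single i 1)) s

end MatrixCoaction

def SatisfiesUnivRelations {B : Type*} [Semiring B] [Algebra k B]
    (τ : Fin n → Fin n → Fin n → k) (c : Fin n → Fin n → B) : Prop :=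
  ∀ a i j, ∑ u, τ i j u • c a u = ∑ s, ∑ t, τ s t a • (c s i * c t j)

end Coordinates

section UniversalAlgebra

variable {k : Type*} [Field k] {n : ℕ} {τ : Fin n → Fin n → Fin n → k}

section CommRing

variable {B : Type*} [CommRing B] [Algebra k B]

theorem aeval_univPoly (c : Fin n → Fin n → B) (a i j : Fin n) :
    aeval (fun p : Fin n × Fin n => c p.1 p.2)
        (univPoly τ (fun i j => Finsupp.equivFunOnFinite.symm (τ i j)) a i j) =
      ∑ u, τ i j u • c a u - ∑ s, ∑ t, τ s t a • (c s i * c t j) := by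
  rw [univPoly, map_sub, map_finsuppSum, Finsupp.sum_fintype _ _ (by simp)]
  simp [Algebra.smul_def, mul_assoc]

theorem satisfiesUnivRelations_iff (c : Fin n → Fin n → B) :
    SatisfiesUnivRelations τ c ↔
      univIdealH τ ≤ RingHom.ker (aeval fun p : Fin n × Fin n => c p.1 p.2) := by
  rw [univIdealH, univIdeal, Ideal.span_le, Set.range_subset_iff]
  simp [SatisfiesUnivRelations, aeval_univPoly, sub_eq_zero]

theorem satisfiesUnivRelations_algHom (θ : univAlgH τ →ₐ[k] B) :
    SatisfiesUnivRelations τ fun s i => θ (univGenH τ s i) := by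
  have h : aeval (fun p : Fin n × Fin n => θ (univGenH τ p.1 p.2)) =
      θ.comp (Ideal.Quotient.mkₐ k (univIdealH τ)) :=
    MvPolynomial.algHom_ext fun _ => by simp [univGen]
  rw [satisfiesUnivRelations_iff, h]
  intro q hq
  simp [Ideal.Quotient.eq_zero_iff_mem.2 hq]

noncomputable def univAlgH.lift (c : Fin n → Fin n → B) (hc : SatisfiesUnivRelations τ c) :
    univAlgH τ →ₐ[k] B :=
  Ideal.Quotient.liftₐ (univIdealH τ) (aeval fun p : Fin n × Fin n => c p.1 p.2)
    fun _ hq => RingHom.mem_ker.1 ((satisfiesUnivRelations_iff c).1 hc hq)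

@[simp]
theorem univAlgH.lift_univGenH (c : Fin n → Fin n → B) (hc : SatisfiesUnivRelations τ c)
    (s i : Fin n) : univAlgH.lift c hc (univGenH τ s i) = c s i := by
  rw [univAlgH.lift, Ideal.Quotient.liftₐ_apply]
  exact (Ideal.Quotient.lift_mk _ _ _).trans (aeval_X _ _)

end CommRing

variable {B : Type*} [Semiring B] [Algebra k B]

theorem univAlgH.algHom_ext {f g : univAlgH τ →ₐ[k] B}
    (h : ∀ s i, f (univGenH τ s i) = g (univGenH τ s i)) : f = g :=
  Ideal.Quotient.algHom_ext _ (MvPolynomial.algHom_ext fun p => h p.1 p.2)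

theorem comul_comp_eq_iff {ΔA : univAlgH τ →ₐ[k] univAlgH τ ⊗[k] univAlgH τ}
    (hΔ : ∀ i j : Fin n, ΔA (univGenH τ i j) = ∑ s, univGenH τ i s ⊗ₜ[k] univGenH τ s j)
    {ΔB : B →ₐ[k] B ⊗[k] B} (θ : univAlgH τ →ₐ[k] B) :
    ΔB.comp θ = (Algebra.TensorProduct.map θ θ).comp ΔA ↔
      ∀ i j, ΔB (θ (univGenH τ i j)) =
        ∑ s, θ (univGenH τ i s) ⊗ₜ[k] θ (univGenH τ s j) := by
  have h : ∀ i j, (Algebra.TensorProduct.map θ θ).comp ΔA (univGenH τ i j) =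
      ∑ s, θ (univGenH τ i s) ⊗ₜ[k] θ (univGenH τ s j) := by
    simp [hΔ]
  refine ⟨fun hθ i j => ?_, fun hθ => univAlgH.algHom_ext fun i j => ?_⟩
  · rw [← h, ← hθ, AlgHom.comp_apply]
  · rw [h, AlgHom.comp_apply, hθ]

theorem counit_comp_eq_iff {εA : univAlgH τ →ₐ[k] k}
    (hε : ∀ i j : Fin n, εA (univGenH τ i j) = if i = j then 1 else 0)
    {εB : B →ₐ[k] k} (θ : univAlgH τ →ₐ[k] B) :
    εB.comp θ = εA ↔ ∀ i j, εB (θ (univGenH τ i j)) = if i = j then 1 else 0 := by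
  refine ⟨fun hθ i j => ?_, fun hθ => univAlgH.algHom_ext fun i j => ?_⟩
  · rw [← hε, ← hθ, AlgHom.comp_apply]
  · rw [AlgHom.comp_apply, hθ, hε]

variable {η : (Fin n → k) →ₗ[k] (Fin n → k) ⊗[k] univAlgH τ}

theorem piScalarLeft_map_coaction
    (hη : ∀ i : Fin n, η (Pi.single i 1) = ∑ s, Pi.single s 1 ⊗ₜ[k] univGenH τ s i)
    (θ : univAlgH τ →ₐ[k] B) (x : Fin n → k) :
    TensorProduct.piScalarLeft k B (TensorProduct.map LinearMap.id θ.toLinearMap (η x)) =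
      matrixCoaction (fun s i => θ (univGenH τ s i)) x := by
  have h : (TensorProduct.piScalarLeft k B).toLinearMap ∘ₗ
      TensorProduct.map LinearMap.id θ.toLinearMap ∘ₗ η =
      matrixCoaction (fun s i => θ (univGenH τ s i)) := by
    ext i s
    simp [hη, Pi.single_apply, matrixCoaction_apply]
  exact LinearMap.congr_fun h x

theorem coaction_eq_tmul_iff
    (hη : ∀ i : Fin n, η (Pi.single i 1) = ∑ s, Pi.single s 1 ⊗ₜ[k] univGenH τ s i)
    (θ : univAlgH τ →ₐ[k] B) (x : Fin n → k) (b : B) :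
    TensorProduct.map LinearMap.id θ.toLinearMap (η x) = x ⊗ₜ[k] b ↔
      matrixCoaction (fun s i => θ (univGenH τ s i)) x = fun s => x s • b := by
  rw [← (TensorProduct.piScalarLeft k B).injective.eq_iff, piScalarLeft_map_coaction hη,
    TensorProduct.piScalarLeft_tmul]

end UniversalAlgebra

section Bracket

variable {k : Type*} [CommSemiring k] {n : ℕ} {τ : Fin n → Fin n → Fin n → k}
  {bH : (Fin n → k) →ₗ[k] (Fin n → k) →ₗ[k] (Fin n → k)}
  (hbH : ∀ i j : Fin n, bH (Pi.single i 1) (Pi.single j 1) = fun s => τ i j s)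
  {B : Type*} [Semiring B] [Algebra k B]

include hbH

theorem matrixCoaction_bracket {c : Fin n → Fin n → B} (hc : SatisfiesUnivRelations τ c)
    (x y : Fin n → k) (a : Fin n) :
    matrixCoaction c (bH x y) a =
      ∑ s, ∑ t, τ s t a • (matrixCoaction c x s * matrixCoaction c y t) := by
  have h : bH.compr₂ (LinearMap.proj a ∘ₗ matrixCoaction c) =
      ∑ s, ∑ t, τ s t a • (LinearMap.mul k B).compl₁₂
        (LinearMap.proj s ∘ₗ matrixCoaction c) (LinearMap.proj t ∘ₗ matrixCoaction c) := by
    ext i j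
    simpa [hbH, matrixCoaction_apply, Pi.single_apply] using hc a i j
  simpa using LinearMap.congr_fun₂ h x y

theorem satisfiesUnivRelations_of_bracket {ρ : (Fin n → k) →ₗ[k] Fin n → B}
    (hρ : ∀ x y a, ρ (bH x y) a = ∑ s, ∑ t, τ s t a • (ρ x s * ρ y t)) :
    SatisfiesUnivRelations τ fun s i => ρ (Pi.single i 1) s := by
  intro a i j
  rw [← hρ, hbH, ← sum_smul_single_one fun s => τ i j s]
  simp

omit [Semiring B] [Algebra k B] in
theorem sum_smul_of_mul_smul_of {G : Type*} [Monoid G] (x y : Fin n → k) (σ δ : G)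
    (a : Fin n) :
    ∑ s, ∑ t, τ s t a •
        ((x s • MonoidAlgebra.of k G σ) * (y t • MonoidAlgebra.of k G δ)) =
      bH x y a • MonoidAlgebra.of k G (σ * δ) := by
  simp [bracket_apply_eq_sum hbH, Finset.sum_smul, mul_comm]

end Bracket

section CoeffMatrix

variable {k G : Type*} [CommRing k] {n : ℕ} {c : Fin n → Fin n → MonoidAlgebra k G}

def coeffMatrix (c : Fin n → Fin n → MonoidAlgebra k G) (g : G) : Matrix (Fin n) (Fin n) k :=
  Matrix.of fun s i => (c s i).coeff g

def coeffProjection (c : Fin n → Fin n → MonoidAlgebra k G) (g : G) :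
    Module.End k (Fin n → k) :=
  Matrix.toLinAlgEquiv' (coeffMatrix c g)

def coeffGrading (c : Fin n → Fin n → MonoidAlgebra k G) (σ : G) : Submodule k (Fin n → k) :=
  LinearMap.range (coeffProjection c σ)

theorem coeffProjection_apply (g : G) (x : Fin n → k) :
    coeffProjection c g x = fun s => (matrixCoaction c x s).coeff g := by
  funext s
  simp [coeffProjection, coeffMatrix, Matrix.mulVec, dotProduct, matrixCoaction_apply,
    MonoidAlgebra.coeff_sum, mul_comm]

theorem OrthogonalIdempotents.coeffProjection (hc : OrthogonalIdempotents (coeffMatrix c)) :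
    OrthogonalIdempotents (coeffProjection c) :=
  hc.map (Matrix.toLinAlgEquiv' (R := k) (n := Fin n)).toRingEquiv.toRingHom

variable [DecidableEq G]

theorem isInternal_coeffGrading (hc : OrthogonalIdempotents (coeffMatrix c))
    {S : Finset G} (hS : ∑ g ∈ S, coeffMatrix c g = 1) :
    DirectSum.IsInternal (coeffGrading c) :=
  hc.coeffProjection.isInternal_range (by
    simp only [coeffProjection]
    rw [← map_sum, hS, map_one])

variable [Monoid G]

theorem orthogonalIdempotents_coeffMatrix
    {Δ : MonoidAlgebra k G →ₗ[k] MonoidAlgebra k G ⊗[k] MonoidAlgebra k G}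
    (hΔ : ∀ g, Δ (MonoidAlgebra.of k G g) =
      MonoidAlgebra.of k G g ⊗ₜ[k] MonoidAlgebra.of k G g)
    (hc : ∀ i j, Δ (c i j) = ∑ s, c i s ⊗ₜ[k] c s j) : OrthogonalIdempotents (coeffMatrix c) := by
  rw [OrthogonalIdempotents.iff_mul_eq]
  intro a b
  ext s j
  have h := MonoidAlgebra.tensorProduct_repr_of_comul hΔ (c s j) a b
  rw [hc, map_sum] at h
  simp [Module.Basis.tensorProduct_repr_tmul_apply] at h
  split_ifs at h ⊢ <;> simpa [coeffMatrix, Matrix.mul_apply, mul_comm] using h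

theorem sum_coeffMatrix {ε : MonoidAlgebra k G →ₗ[k] k}
    (hε : ∀ g, ε (MonoidAlgebra.of k G g) = 1)
    (hc : ∀ i j, ε (c i j) = if i = j then 1 else 0) :
    ∑ g ∈ Finset.univ.biUnion (fun p : Fin n × Fin n => (c p.1 p.2).coeff.support),
      coeffMatrix c g = 1 := by
  ext s i
  rw [Matrix.sum_apply, Matrix.one_apply, ← hc]
  refine (MonoidAlgebra.eq_sum_coeff_of_counit hε _ fun g hg => ?_).symm
  exact Finset.mem_biUnion.2 ⟨(s, i), Finset.mem_univ _, hg⟩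

theorem mem_coeffGrading_iff (hc : OrthogonalIdempotents (coeffMatrix c)) (σ : G)
    (x : Fin n → k) :
    x ∈ coeffGrading c σ ↔ matrixCoaction c x = fun s => x s • MonoidAlgebra.of k G σ := by
  rw [coeffGrading, hc.coeffProjection.mem_range_iff]
  simp only [coeffProjection_apply, funext_iff, ← MonoidAlgebra.coeff_inj, Finsupp.ext_iff]
  rw [forall_comm]
  refine forall_congr' fun s => forall_congr' fun g => ?_
  by_cases hg : g = σ <;> simp [hg]

theorem bracket_mem_coeffGrading {τ : Fin n → Fin n → Fin n → k}
    {bH : (Fin n → k) →ₗ[k] (Fin n → k) →ₗ[k] (Fin n → k)}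
    (hbH : ∀ i j : Fin n, bH (Pi.single i 1) (Pi.single j 1) = fun s => τ i j s)
    (hrel : SatisfiesUnivRelations τ c) (hc : OrthogonalIdempotents (coeffMatrix c))
    {σ δ : G} {x y : Fin n → k} (hx : x ∈ coeffGrading c σ) (hy : y ∈ coeffGrading c δ) :
    bH x y ∈ coeffGrading c (σ * δ) := by
  rw [mem_coeffGrading_iff hc] at hx hy ⊢
  funext a
  rw [matrixCoaction_bracket hbH hrel, hx, hy, sum_smul_of_mul_smul_of hbH]

end CoeffMatrix

section GradedCoaction

variable {k G : Type*} [CommRing k] [Monoid G] [DecidableEq G] {n : ℕ}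
  {ℌ : G → Submodule k (Fin n → k)} (hD : DirectSum.IsInternal ℌ)

-- `x ↦ ∑ g, x_g ⊗ g` in coordinates, where `x_g` is the `g`-component of `x`.
noncomputable def gradedCoaction : (Fin n → k) →ₗ[k] Fin n → MonoidAlgebra k G :=
  DirectSum.toModule k G _ (fun g => LinearMap.pi (fun s =>
      (LinearMap.proj s).smulRight (MonoidAlgebra.of k G g)) ∘ₗ (ℌ g).subtype) ∘ₗ
    (LinearEquiv.ofBijective (DirectSum.coeLinearMap ℌ) hD).symm.toLinearMap

include hD in
theorem gradedCoaction_of_mem {g : G} {x : Fin n → k} (hx : x ∈ ℌ g) :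
    gradedCoaction hD x = fun s => x s • MonoidAlgebra.of k G g := by
  have hdec : (LinearEquiv.ofBijective (DirectSum.coeLinearMap ℌ) hD).symm x =
      DirectSum.of (fun g => ℌ g) g ⟨x, hx⟩ :=
    (LinearEquiv.symm_apply_eq _).2 (DirectSum.coeLinearMap_of ℌ g ⟨x, hx⟩).symm
  rw [gradedCoaction, LinearMap.comp_apply, LinearEquiv.coe_coe, hdec, ← DirectSum.lof_eq_of k,
    DirectSum.toModule_lof]
  rfl

theorem coeff_gradedCoaction (x : Fin n → k) (σ : G) (s : Fin n) :
    (gradedCoaction hD x s).coeff σ =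
      ((LinearEquiv.ofBijective (DirectSum.coeLinearMap ℌ) hD).symm x σ : Fin n → k) s := by
  induction x using hD.induction_on with
  | mem g x hx =>
    rw [gradedCoaction_of_mem hD hx]
    by_cases hg : g = σ
    · subst hg
      simp [hD.ofBijective_coeLinearMap_of_mem hx]
    · simp [hD.ofBijective_coeLinearMap_of_mem_ne hg hx, hg]
  | zero => simp
  | add x y hx hy => simp [hx, hy]

theorem mem_of_gradedCoaction_eq {σ : G} {x : Fin n → k}
    (h : gradedCoaction hD x = fun s => x s • MonoidAlgebra.of k G σ) : x ∈ ℌ σ := by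
  have hx : ((LinearEquiv.ofBijective (DirectSum.coeLinearMap ℌ) hD).symm x σ : Fin n → k) =
      x :=
    funext fun s => by simp [← coeff_gradedCoaction, h]
  exact hx ▸ Submodule.coe_mem _

theorem eq_gradedCoaction {ρ : (Fin n → k) →ₗ[k] Fin n → MonoidAlgebra k G}
    (h : ∀ g, ∀ x ∈ ℌ g, ρ x = fun s => x s • MonoidAlgebra.of k G g) :
    ρ = gradedCoaction hD :=
  LinearMap.ext fun x => hD.induction_on x
    (fun g x hx => (h g x hx).trans (gradedCoaction_of_mem hD hx).symm) (by simp)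
    fun x y hx hy => by simp [hx, hy]

theorem gradedCoaction_bracket {τ : Fin n → Fin n → Fin n → k}
    {bH : (Fin n → k) →ₗ[k] (Fin n → k) →ₗ[k] (Fin n → k)}
    (hbH : ∀ i j : Fin n, bH (Pi.single i 1) (Pi.single j 1) = fun s => τ i j s)
    (hBr : ∀ σ δ : G, ∀ x ∈ ℌ σ, ∀ y ∈ ℌ δ, bH x y ∈ ℌ (σ * δ))
    (x y : Fin n → k) (a : Fin n) :
    gradedCoaction hD (bH x y) a =
      ∑ s, ∑ t, τ s t a • (gradedCoaction hD x s * gradedCoaction hD y t) := by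
  induction x using hD.induction_on generalizing y with
  | mem σ x hx =>
    induction y using hD.induction_on with
    | mem δ y hy =>
      rw [gradedCoaction_of_mem hD (hBr σ δ x hx y hy), gradedCoaction_of_mem hD hx,
        gradedCoaction_of_mem hD hy, sum_smul_of_mul_smul_of hbH]
    | zero => simp
    | add y y' hy hy' => simp [hy, hy', mul_add, Finset.sum_add_distrib]
  | zero => simp
  | add x x' hx hx' => simp [hx, hx', add_mul, Finset.sum_add_distrib]

theorem comul_gradedCoaction
    {Δ : MonoidAlgebra k G →ₗ[k] MonoidAlgebra k G ⊗[k] MonoidAlgebra k G}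
    (hΔ : ∀ g, Δ (MonoidAlgebra.of k G g) =
      MonoidAlgebra.of k G g ⊗ₜ[k] MonoidAlgebra.of k G g)
    (x : Fin n → k) (i : Fin n) :
    Δ (gradedCoaction hD x i) =
      ∑ s, gradedCoaction hD (Pi.single s 1) i ⊗ₜ[k] gradedCoaction hD x s := by
  induction x using hD.induction_on with
  | mem g x hx =>
    have hsum : ∑ s, x s • gradedCoaction hD (Pi.single s 1) i =
        x i • MonoidAlgebra.of k G g := by
      rw [← matrixCoaction_apply (fun s j => gradedCoaction hD (Pi.single j 1) s),
        matrixCoaction_apply_single_one, gradedCoaction_of_mem hD hx]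
    simp only [gradedCoaction_of_mem hD hx, map_smul, hΔ, TensorProduct.tmul_smul]
    rw [TensorProduct.smul_tmul', ← hsum, TensorProduct.sum_tmul]
    simp only [TensorProduct.smul_tmul']
  | zero => simp
  | add x y hx hy => simp [hx, hy, TensorProduct.tmul_add, Finset.sum_add_distrib]

theorem counit_gradedCoaction {ε : MonoidAlgebra k G →ₗ[k] k}
    (hε : ∀ g, ε (MonoidAlgebra.of k G g) = 1) (x : Fin n → k) (i : Fin n) :
    ε (gradedCoaction hD x i) = x i := by
  induction x using hD.induction_on with
  | mem g x hx => simp only [gradedCoaction_of_mem hD hx, map_smul, hε, smul_eq_mul, mul_one]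
  | zero => simp
  | add x y hx hy => simp [hx, hy]

end GradedCoaction

theorem coe_eq_setOf_coaction_iff {k G : Type*} [Field k] [Monoid G] [DecidableEq G] {n : ℕ}
    {τ : Fin n → Fin n → Fin n → k} {η : (Fin n → k) →ₗ[k] (Fin n → k) ⊗[k] univAlgH τ}
    (hη : ∀ i : Fin n, η (Pi.single i 1) = ∑ s, Pi.single s 1 ⊗ₜ[k] univGenH τ s i)
    {ℌ : G → Submodule k (Fin n → k)} (hD : DirectSum.IsInternal ℌ)
    (θ : univAlgH τ →ₐ[k] MonoidAlgebra k G) :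
    (∀ σ, (ℌ σ : Set (Fin n → k)) =
        {x | TensorProduct.map LinearMap.id θ.toLinearMap (η x) =
          x ⊗ₜ[k] MonoidAlgebra.of k G σ}) ↔
      matrixCoaction (fun s i => θ (univGenH τ s i)) = gradedCoaction hD := by
  simp only [coaction_eq_tmul_iff hη]
  refine ⟨fun h => eq_gradedCoaction hD fun g x hx => ?_, fun h σ => Set.ext fun x => ?_⟩
  · exact (Set.ext_iff.1 (h g) x).1 hx
  · rw [SetLike.mem_coe, Set.mem_ofPred_eq, h]
    exact ⟨gradedCoaction_of_mem hD, mem_of_gradedCoaction_eq hD⟩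

theorem stmt_17_general (k : Type*) [Field k] (n : ℕ) (τ : Fin n → Fin n → Fin n → k)
    (G : Type*) [CommGroup G] [DecidableEq G]
    (bH : (Fin n → k) →ₗ[k] (Fin n → k) →ₗ[k] (Fin n → k))
    (hbH : ∀ i j : Fin n, bH (Pi.single i 1) (Pi.single j 1) = fun s => τ i j s)
    (ΔA : univAlgH τ →ₐ[k] univAlgH τ ⊗[k] univAlgH τ) (εA : univAlgH τ →ₐ[k] k)
    (hΔ : ∀ i j : Fin n, ΔA (univGenH τ i j) =
      ∑ s : Fin n, univGenH τ i s ⊗ₜ[k] univGenH τ s j)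
    (hε : ∀ i j : Fin n, εA (univGenH τ i j) = if i = j then 1 else 0)
    (η : (Fin n → k) →ₗ[k] (Fin n → k) ⊗[k] univAlgH τ)
    (hη : ∀ i : Fin n, η (Pi.single i 1) =
      ∑ s : Fin n, Pi.single s 1 ⊗ₜ[k] univGenH τ s i)
    (ΔG : MonoidAlgebra k G →ₐ[k] MonoidAlgebra k G ⊗[k] MonoidAlgebra k G)
    (hΔG : ∀ σ : G, ΔG (MonoidAlgebra.of k G σ) =
      MonoidAlgebra.of k G σ ⊗ₜ[k] MonoidAlgebra.of k G σ)
    (εG : MonoidAlgebra k G →ₐ[k] k)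
    (hεG : ∀ σ : G, εG (MonoidAlgebra.of k G σ) = 1) :
    (∀ θ : univAlgH τ →ₐ[k] MonoidAlgebra k G,
      ΔG.comp θ = (Algebra.TensorProduct.map θ θ).comp ΔA → εG.comp θ = εA →
        ∃ ℌ : G → Submodule k (Fin n → k),
          (∀ σ : G, (ℌ σ : Set (Fin n → k)) =
            {x | TensorProduct.map LinearMap.id θ.toLinearMap (η x) =
              x ⊗ₜ[k] MonoidAlgebra.of k G σ}) ∧
          DirectSum.IsInternal ℌ ∧
          (∀ σ δ : G, ∀ x ∈ ℌ σ, ∀ y ∈ ℌ δ, bH x y ∈ ℌ (σ * δ))) ∧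
    (∀ ℌ : G → Submodule k (Fin n → k), DirectSum.IsInternal ℌ →
      (∀ σ δ : G, ∀ x ∈ ℌ σ, ∀ y ∈ ℌ δ, bH x y ∈ ℌ (σ * δ)) →
        ∃! θ : univAlgH τ →ₐ[k] MonoidAlgebra k G,
          ΔG.comp θ = (Algebra.TensorProduct.map θ θ).comp ΔA ∧ εG.comp θ = εA ∧
          ∀ σ : G, (ℌ σ : Set (Fin n → k)) =
            {x | TensorProduct.map LinearMap.id θ.toLinearMap (η x) =
              x ⊗ₜ[k] MonoidAlgebra.of k G σ}) := by
  refine ⟨fun θ hΔθ hεθ => ?_, fun ℌ hD hBr => ?_⟩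
  · have hc : OrthogonalIdempotents (coeffMatrix fun s i => θ (univGenH τ s i)) :=
      orthogonalIdempotents_coeffMatrix (Δ := ΔG.toLinearMap) hΔG
        ((comul_comp_eq_iff hΔ θ).1 hΔθ)
    have hsum := sum_coeffMatrix (ε := εG.toLinearMap) hεG ((counit_comp_eq_iff hε θ).1 hεθ)
    refine ⟨coeffGrading fun s i => θ (univGenH τ s i), fun σ => ?_,
      isInternal_coeffGrading hc hsum, fun σ δ x hx y hy =>
        bracket_mem_coeffGrading hbH (satisfiesUnivRelations_algHom θ) hc hx hy⟩
    ext x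
    exact (mem_coeffGrading_iff hc σ x).trans (coaction_eq_tmul_iff hη θ x _).symm
  · have hrel := satisfiesUnivRelations_of_bracket hbH (gradedCoaction_bracket hD hbH hBr)
    have hθ : matrixCoaction (fun s i => univAlgH.lift _ hrel (univGenH τ s i)) =
        gradedCoaction hD := by
      simpa only [univAlgH.lift_univGenH] using matrixCoaction_apply_single_one _
    refine ⟨univAlgH.lift _ hrel, ⟨(comul_comp_eq_iff hΔ _).2 fun i j => ?_,
      (counit_comp_eq_iff hε _).2 fun i j => ?_, (coe_eq_setOf_coaction_iff hη hD _).2 hθ⟩,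
      fun θ' ⟨_, _, hθ'⟩ => univAlgH.algHom_ext fun s i => ?_⟩
    · simpa using comul_gradedCoaction hD (Δ := ΔG.toLinearMap) hΔG (Pi.single j 1) i
    · simpa [Pi.single_apply] using
        counit_gradedCoaction hD (ε := εG.toLinearMap) hεG (Pi.single j 1) i
    · exact congrFun (congrFun (matrixCoaction_injective
        (((coe_eq_setOf_coaction_iff hη hD θ').1 hθ').trans hθ.symm)) s) i

/-- for an abelian group `G`, there is a bijection between the
`G`-gradings on `h` and the bialgebra homomorphisms `A(h) → k[G]`, under which a
bialgebra map `θ` corresponds to the grading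
`h_σ^{(θ)} = {x | (Id ⊗ θ)(η_h(x)) = x ⊗ σ}`: every bialgebra homomorphism gives a
`G`-grading by this formula, and every `G`-grading arises this way from a unique
bialgebra homomorphism. -/
theorem stmt_17 (k : Type*) [Field k] (n : ℕ) (τ : Fin n → Fin n → Fin n → k)
    (G : Type*) [CommGroup G] [DecidableEq G]
    (bH : (Fin n → k) →ₗ[k] (Fin n → k) →ₗ[k] (Fin n → k))
    (hbH : ∀ i j : Fin n, bH (Pi.single i 1) (Pi.single j 1) = fun s => τ i j s)
    (hLH : ∀ x y z, bH x (bH y z) = bH (bH x y) z - bH (bH x z) y)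
    (ΔA : univAlgH τ →ₐ[k] univAlgH τ ⊗[k] univAlgH τ) (εA : univAlgH τ →ₐ[k] k)
    (hΔ : ∀ i j : Fin n, ΔA (univGenH τ i j) =
      ∑ s : Fin n, univGenH τ i s ⊗ₜ[k] univGenH τ s j)
    (hε : ∀ i j : Fin n, εA (univGenH τ i j) = if i = j then 1 else 0)
    (η : (Fin n → k) →ₗ[k] (Fin n → k) ⊗[k] univAlgH τ)
    (hη : ∀ i : Fin n, η (Pi.single i 1) =
      ∑ s : Fin n, Pi.single s 1 ⊗ₜ[k] univGenH τ s i)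
    (ΔG : MonoidAlgebra k G →ₐ[k] MonoidAlgebra k G ⊗[k] MonoidAlgebra k G)
    (hΔG : ∀ σ : G, ΔG (MonoidAlgebra.of k G σ) =
      MonoidAlgebra.of k G σ ⊗ₜ[k] MonoidAlgebra.of k G σ)
    (εG : MonoidAlgebra k G →ₐ[k] k)
    (hεG : ∀ σ : G, εG (MonoidAlgebra.of k G σ) = 1) :
    (∀ θ : univAlgH τ →ₐ[k] MonoidAlgebra k G,
      ΔG.comp θ = (Algebra.TensorProduct.map θ θ).comp ΔA → εG.comp θ = εA →
        ∃ ℌ : G → Submodule k (Fin n → k),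
          (∀ σ : G, (ℌ σ : Set (Fin n → k)) =
            {x | TensorProduct.map LinearMap.id θ.toLinearMap (η x) =
              x ⊗ₜ[k] MonoidAlgebra.of k G σ}) ∧
          DirectSum.IsInternal ℌ ∧
          (∀ σ δ : G, ∀ x ∈ ℌ σ, ∀ y ∈ ℌ δ, bH x y ∈ ℌ (σ * δ))) ∧
    (∀ ℌ : G → Submodule k (Fin n → k), DirectSum.IsInternal ℌ →
      (∀ σ δ : G, ∀ x ∈ ℌ σ, ∀ y ∈ ℌ δ, bH x y ∈ ℌ (σ * δ)) →
        ∃! θ : univAlgH τ →ₐ[k] MonoidAlgebra k G,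
          ΔG.comp θ = (Algebra.TensorProduct.map θ θ).comp ΔA ∧ εG.comp θ = εA ∧
          ∀ σ : G, (ℌ σ : Set (Fin n → k)) =
            {x | TensorProduct.map LinearMap.id θ.toLinearMap (η x) =
              x ⊗ₜ[k] MonoidAlgebra.of k G σ}) :=
  stmt_17_general k n τ G bH hbH ΔA εA hΔ hε η hη ΔG hΔG εG hεG
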